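/- arXiv:1408.1854 — 3 statements merged into one kernel-verified Lean document; each statement's English description precedes it below -/
import Mathlib

section
/- Soundness of rule H6: for every consistent architecture A, if none of the preconditions of rules H1–H5 holds at C_i for X or any X_k — i.e., A contains no Has_i(X̃), no Receive_{i,j} carrying X̃, no Compute_i(X̃ = T), no Spotcheck_{i,j}(X_k, E), and there is no Dep_i(X̃, {X̃^1,…,X̃^n}) whose input variables C_i can all fully obtain — then A ∈ S(Has_i^none(X̃)): every state reached by a trace compatible with A satisfies σ_i^v(X̃) = ⊥. -/
namespace PrivacyArch

attribute [local instance] Classical.propDecidable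

/-- Signature: the basic types of a privacy-architecture framework.
`Comp` is the set of components, `Var` the (possibly array) variables,
`IVar` the index variables, `Fn` the function symbols, `Cst` the constants
and `Val` the values. -/
structure Sig : Type 1 where
  Comp : Type
  Var : Type
  IVar : Type
  Fn : Type
  Cst : Type
  Val : Type

/-- Indexes `K ::= k | Ck`: index variables or natural-number constants. -/
inductive Idx (S : Sig) : Type
  | ivar : S.IVar → Idx S
  | nat : ℕ → Idx S

/-- (Possibly indexed) variables `X̃ ::= X | X_K`. -/
inductive TVar (S : Sig) : Type
  | simple : S.Var → TVar S
  | idx : S.Var → Idx S → TVar S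

/-- The underlying (base) variable of an `X̃`. -/
def TVar.base {S : Sig} : TVar S → S.Var
  | .simple X => X
  | .idx X _ => X

/-- Terms `T ::= X̃ | Cx | F (T1, …, Tn) | ⊙F (X)`. -/
inductive Term (S : Sig) : Type
  | var : TVar S → Term S
  | cst : S.Cst → Term S
  | app : S.Fn → List (Term S) → Term S
  | iter : S.Fn → S.Var → Term S

/-- Relations `Rel ::= = | < | > | ≤ | ≥`. -/
inductive Rel : Type
  | eq | lt | gt | le | ge

/-- Primitive equations `Eq ::= T1 Rel T2`. -/
structure Eqn (S : Sig) : Type where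
  lhs : Term S
  rel : Rel
  rhs : Term S

/-- Atomic properties stored in property states: equations and trust assertions. -/
inductive PProp (S : Sig) : Type
  | eq : Eqn S → PProp S
  | trust : S.Comp → S.Comp → PProp S

/-- Equations of the privacy logic, closed under conjunction:
`Eq ::= T1 Rel T2 | Eq1 ∧ Eq2`. -/
inductive LEqn (S : Sig) : Type
  | atom : Eqn S → LEqn S
  | and : LEqn S → LEqn S → LEqn S

/-- Attestations `Att ::= Attest_i({Eq})`. -/
inductive Att (S : Sig) : Type
  | mk : S.Comp → List (Eqn S) → Att S

/-- Proof items `P ::= Att | Eq`. -/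
inductive PItem (S : Sig) : Type
  | att : Att S → PItem S
  | eq : Eqn S → PItem S

/-- Proofs `Pro ::= Proof_i({P})`. -/
inductive Pro (S : Sig) : Type
  | mk : S.Comp → List (PItem S) → Pro S

/-- Statements `S ::= Pro | Att`. -/
inductive Stmt (S : Sig) : Type
  | pro : Pro S → Stmt S
  | att : Att S → Stmt S

/-- Ground references to variables: a whole (simple or array) variable `X`,
or an array element `X_Ck` with `Ck ∈ ℕ`. -/
inductive Ref (S : Sig) : Type
  | var : S.Var → Ref S
  | elem : S.Var → ℕ → Ref S

/-- The underlying (base) variable of a reference. -/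
def Ref.base {S : Sig} : Ref S → S.Var
  | .var X => X
  | .elem X _ => X

/-- Variable states `State_V`: each variable denotes an array of fixed size
`Range X` (simple variables have `Range X = 1` and are stored at index `0`);
`none` is the undefined value ⊥. -/
def VState (S : Sig) : Type := S.Var → ℕ → Option S.Val

/-- A model fixes the interpretation of constants, functions (including the
iterated application `⊙F`), relations, the size `Range X` of each array, the
deductive systems `▷_i`, the dependence relations `Dep_i` and the internal
verification functions for proofs and attestations.  The deductive systems are
assumed to be able to derive their premises, to be monotone, closed under
conjunction and cut, and to derive some (trivially true) equation from any
property set. -/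
structure Model (S : Sig) : Type 1 where
  cstI : S.Cst → S.Val
  funI : S.Fn → List S.Val → S.Val
  iterI : S.Fn → List S.Val → S.Val
  relI : Rel → S.Val → S.Val → Prop
  Range : S.Var → ℕ
  /-- the deductive system `▷_i` of component `C_i` -/
  deduce : S.Comp → Set (PProp S) → LEqn S → Prop
  /-- the dependence relation `Dep_i` of component `C_i` -/
  dep : S.Comp → Ref S → Set (Ref S) → Prop
  /-- the proof-verification function of component `C_i` -/
  verifP : S.Comp → List (PItem S) → VState S → Prop
  /-- the attestation-verification function of component `C_i` -/
  verifA : S.Comp → List (Eqn S) → VState S → Prop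
  deduce_mem : ∀ i P e, PProp.eq e ∈ P → deduce i P (.atom e)
  deduce_mono : ∀ i P P' e, P ⊆ P' → deduce i P e → deduce i P' e
  deduce_and : ∀ i P e1 e2, deduce i P e1 → deduce i P e2 → deduce i P (.and e1 e2)
  deduce_cut : ∀ i P (E : Set (Eqn S)) e,
    (∀ e' ∈ E, deduce i P (.atom e')) → deduce i (PProp.eq '' E) e → deduce i P e
  deduce_ex : ∀ i P, ∃ e, deduce i P e

/-- The relations of the privacy architecture language (Table 2). -/
inductive ArchRel (S : Sig) : Type
  | has : S.Comp → TVar S → ArchRel S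
  | receive : S.Comp → S.Comp → List (Stmt S) → List (TVar S) → ArchRel S
  | compute : S.Comp → TVar S → Term S → ArchRel S
  | check : S.Comp → List (Eqn S) → ArchRel S
  | verifP : S.Comp → Pro S → ArchRel S
  | verifA : S.Comp → Att S → ArchRel S
  | spotcheck : S.Comp → S.Comp → S.Var → S.IVar → List (Eqn S) → ArchRel S
  | trust : S.Comp → S.Comp → ArchRel S

/-- An architecture is a finite set (here: list) of relations. -/
abbrev Arch (S : Sig) := List (ArchRel S)

/-- Events (Table 3): instantiations of the architecture relations carrying
concrete values for variables and integer indexes. -/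
inductive Event (S : Sig) : Type
  | has : S.Comp → Ref S → (ℕ → S.Val) → Event S
  | receive : S.Comp → S.Comp → List (Stmt S) → List (Ref S × (ℕ → S.Val)) → Event S
  | compute : S.Comp → Ref S → Term S → Event S
  | check : S.Comp → List (Eqn S) → Event S
  | verifP : S.Comp → Pro S → Event S
  | verifA : S.Comp → Att S → Event S
  | spotcheck : S.Comp → S.Comp → S.Var → ℕ → S.Val → List (Eqn S) → Event S

def Event.isCompute {S : Sig} : Event S → Prop
  | .compute _ _ _ => True
  | _ => False

/-- Instantiation of an `X̃` by an index environment, as a ground reference. -/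
def instVar {S : Sig} (η : S.IVar → ℕ) : TVar S → Ref S
  | .simple X => .var X
  | .idx X (.nat n) => .elem X n
  | .idx X (.ivar k) => .elem X (η k)

/-- Instantiation of an `X̃` by an index environment, inside terms. -/
def instTV {S : Sig} (η : S.IVar → ℕ) : TVar S → TVar S
  | .simple X => .simple X
  | .idx X (.nat n) => .idx X (.nat n)
  | .idx X (.ivar k) => .idx X (.nat (η k))

/-- Instantiation of the index variables of a term by integer values. -/
inductive InstTerm {S : Sig} (η : S.IVar → ℕ) : Term S → Term S → Prop
  | var (tv) : InstTerm η (.var tv) (.var (instTV η tv))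
  | cst (c) : InstTerm η (.cst c) (.cst c)
  | app {f ts ts'} (hlen : ts.length = ts'.length)
      (h : ∀ (p : ℕ) t t', ts[p]? = some t → ts'[p]? = some t' → InstTerm η t t') :
      InstTerm η (.app f ts) (.app f ts')
  | iter (f X) : InstTerm η (.iter f X) (.iter f X)

/-- `Inst ε α` (written `𝒞(ε, α)` in the paper): the event `ε` can be obtained
from the architecture relation `α` by adding specific values for variables and
instantiating index variables to integer values. -/
inductive Inst {S : Sig} : Event S → ArchRel S → Prop
  | has {i tv f} (η) : Inst (.has i (instVar η tv) f) (.has i tv)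
  | receive {i j ss tvs rvs} (η) (hlen : tvs.length = rvs.length)
      (h : ∀ (p : ℕ) tv rv, tvs[p]? = some tv → rvs[p]? = some rv →
        Prod.fst rv = instVar η tv) :
      Inst (.receive i j ss rvs) (.receive i j ss tvs)
  | compute {i tv T T'} (η) (hT : InstTerm η T T') :
      Inst (.compute i (instVar η tv) T') (.compute i tv T)
  | check {i E} : Inst (.check i E) (.check i E)
  | verifP {i p} : Inst (.verifP i p) (.verifP i p)
  | verifA {i a} : Inst (.verifA i a) (.verifA i a)
  | spotcheck {i j X k n V E} : Inst (.spotcheck i j X n V E) (.spotcheck i j X k E)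

/-- Compatibility of a trace with an architecture (Definition 1): every event
other than a `compute` event instantiates an element of `A`, and there is at
most one spotcheck per pair of components. -/
def Compatible {S : Sig} (A : Arch S) (θ : List (Event S)) : Prop :=
  (∀ e ∈ θ, ¬ e.isCompute → ∃ α ∈ A, Inst e α) ∧
  ∀ (a b : Fin θ.length) i j X n V E X' n' V' E', a ≠ b →
    θ.get a = Event.spotcheck i j X n V E →
    θ.get b = Event.spotcheck i j X' n' V' E' → False

/-- The default (ground) index environment used to evaluate event terms. -/
def eta0 (S : Sig) : S.IVar → ℕ := fun _ => 0

/-- Evaluation `ε(T, σ^v)` of a term in a variable state (partial: a term with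
an undefined variable has no value). -/
inductive EvalTerm {S : Sig} (M : Model S) (η : S.IVar → ℕ) (w : VState S) :
    Term S → S.Val → Prop
  | simple {X v} : w X 0 = some v → EvalTerm M η w (.var (.simple X)) v
  | idxN {X n v} : w X n = some v → EvalTerm M η w (.var (.idx X (.nat n))) v
  | idxI {X k v} : w X (η k) = some v → EvalTerm M η w (.var (.idx X (.ivar k))) v
  | cst (c) : EvalTerm M η w (.cst c) (M.cstI c)
  | app {f ts vs} (hlen : List.length ts = List.length vs)
      (h : ∀ (p : ℕ) t v, ts[p]? = some t → vs[p]? = some v → EvalTerm M η w t v) :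
      EvalTerm M η w (.app f ts) (M.funI f vs)
  | iter {f X} {vals : ℕ → S.Val}
      (h : ∀ k < M.Range X, w X k = some (vals k)) :
      EvalTerm M η w (.iter f X) (M.iterI f ((List.range (M.Range X)).map vals))

/-- Evaluation of an equation to `True` in a variable state. -/
def EvEq {S : Sig} (M : Model S) (η : S.IVar → ℕ) (w : VState S) (e : Eqn S) : Prop :=
  ∃ a b, EvalTerm M η w e.lhs a ∧ EvalTerm M η w e.rhs b ∧ M.relI e.rel a b

/-- Evaluation of a logic equation (conjunction of primitive equations). -/
def LEval {S : Sig} (M : Model S) (η : S.IVar → ℕ) (w : VState S) : LEqn S → Prop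
  | .atom e => EvEq M η w e
  | .and a b => LEval M η w a ∧ LEval M η w b

/-- Semantic implication `Eq1 ⇒ Eq2` between logic equations. -/
def LImp {S : Sig} (M : Model S) (e1 e2 : LEqn S) : Prop :=
  ∀ η w, LEval M η w e1 → LEval M η w e2

/-- Non-error component states: a variable state, the property state of known
properties, the property state of believed properties, and the set of
statements received so far. -/
structure OkState (S : Sig) : Type where
  v : VState S
  pk : Set (PProp S)
  pb : Set (PProp S)
  rcv : Set (Stmt S)

/-- Component states: `Error` or a non-error state. -/
inductive CState (S : Sig) : Type
  | error : CState S
  | ok : OkState S → CState S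

/-- Global states: one state per component. -/
def GState (S : Sig) : Type := S.Comp → CState S

/-- Update of a variable state at a reference (`σ^v_i[X̃/V]`). -/
noncomputable def updRef {S : Sig} (M : Model S) (w : VState S) :
    Ref S → (ℕ → S.Val) → VState S
  | .var X, f => fun Y k => if Y = X ∧ k < M.Range X then some (f k) else w Y k
  | .elem X n, f => fun Y k => if Y = X ∧ k = n then some (f 0) else w Y k

/-- Update of a global state at one component (`σ[σ_i / …]`). -/
noncomputable def upd {S : Sig} (σ : GState S) (i : S.Comp) (c : CState S) : GState S :=
  fun j => if j = i then c else σ j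

/-- The term denoted by a ground reference. -/
def refTerm {S : Sig} : Ref S → Term S
  | .var X => .var (.simple X)
  | .elem X n => .var (.idx X (.nat n))

/-- `σ^v_i(X̃)` does not contain any ⊥. -/
def NoBot {S : Sig} (M : Model S) (w : VState S) : Ref S → Prop
  | .var X => ∀ k < M.Range X, w X k ≠ none
  | .elem X n => w X n ≠ none

/-- `σ^v_i(X̃) = ⊥` (no part of the content of `X̃` is defined). -/
def AllBot {S : Sig} (M : Model S) (w : VState S) : Ref S → Prop
  | .var X => ∀ k < M.Range X, w X k = none
  | .elem X n => w X n = none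

/-- At most one entry of `σ^v_i(X)` differs from ⊥. -/
def AtMostOne {S : Sig} (M : Model S) (w : VState S) : Ref S → Prop
  | .var X => Set.Subsingleton {k | k < M.Range X ∧ w X k ≠ none}
  | .elem _ _ => True

/-- The initial state `Init^A`: empty variable states; the only information is
the trust properties specified by the architecture. -/
def Init {S : Sig} (A : Arch S) : GState S := fun i =>
  CState.ok ⟨fun _ _ => none,
    {p | ∃ j, p = PProp.trust i j ∧ ArchRel.trust i j ∈ A}, ∅, ∅⟩

/-- The semantics of events (Table 4), given as a step relation
`Step M ε σ σ'` (the event semantics is deterministic). -/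
inductive Step {S : Sig} (M : Model S) : Event S → GState S → GState S → Prop
  | has {σ i r f s} (h : σ i = CState.ok s) :
      Step M (.has i r f) σ (upd σ i (CState.ok ⟨updRef M s.v r f, s.pk, s.pb, s.rcv⟩))
  | receive {σ i j ss rvs s} (h : σ i = CState.ok s) :
      Step M (.receive i j ss rvs) σ
        (upd σ i (CState.ok ⟨rvs.foldl (fun w rv => updRef M w rv.1 rv.2) s.v,
          s.pk, s.pb, s.rcv ∪ {st | st ∈ ss}⟩))
  | compute {σ i r T s val} (h : σ i = CState.ok s)
      (hev : EvalTerm M (eta0 S) s.v T val) :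
      Step M (.compute i r T) σ
        (upd σ i (CState.ok ⟨updRef M s.v r (fun _ => val),
          insert (PProp.eq ⟨refTerm r, Rel.eq, T⟩) s.pk, s.pb, s.rcv⟩))
  | check_ok {σ i E s} (h : σ i = CState.ok s)
      (hE : ∀ e ∈ E, EvEq M (eta0 S) s.v e) :
      Step M (.check i E) σ
        (upd σ i (CState.ok ⟨s.v, s.pk ∪ {p | ∃ e ∈ E, p = PProp.eq e}, s.pb, s.rcv⟩))
  | check_err {σ i E s} (h : σ i = CState.ok s)
      (hE : ¬ ∀ e ∈ E, EvEq M (eta0 S) s.v e) :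
      Step M (.check i E) σ (upd σ i CState.error)
  | verifP_ok {σ i j Ps s} (h : σ i = CState.ok s) (hv : M.verifP i Ps s.v) :
      Step M (.verifP i (.mk j Ps)) σ
        (upd σ i (CState.ok ⟨s.v,
          s.pk ∪ {p | ∃ e, p = PProp.eq e ∧ (PItem.eq e ∈ Ps ∨
            ∃ j' E', PItem.att (.mk j' E') ∈ Ps ∧ e ∈ E' ∧ PProp.trust i j' ∈ s.pk)},
          s.pb, s.rcv⟩))
  | verifP_err {σ i j Ps s} (h : σ i = CState.ok s) (hv : ¬ M.verifP i Ps s.v) :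
      Step M (.verifP i (.mk j Ps)) σ (upd σ i CState.error)
  | verifA_ok {σ i j E s} (h : σ i = CState.ok s) (hv : M.verifA i E s.v) :
      Step M (.verifA i (.mk j E)) σ
        (upd σ i (CState.ok ⟨s.v,
          s.pk ∪ {p | ∃ e ∈ E, p = PProp.eq e ∧ PProp.trust i j ∈ s.pk},
          s.pb, s.rcv⟩))
  | verifA_err {σ i j E s} (h : σ i = CState.ok s) (hv : ¬ M.verifA i E s.v) :
      Step M (.verifA i (.mk j E)) σ (upd σ i CState.error)
  | spot_ok {σ i j X n V E s} (h : σ i = CState.ok s)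
      (hE : ∀ e ∈ E, EvEq M (fun _ => n) (updRef M s.v (.elem X n) (fun _ => V)) e) :
      Step M (.spotcheck i j X n V E) σ
        (upd σ i (CState.ok ⟨updRef M s.v (.elem X n) (fun _ => V),
          s.pk, s.pb ∪ {p | ∃ e ∈ E, p = PProp.eq e}, s.rcv⟩))
  | spot_err {σ i j X n V E s} (h : σ i = CState.ok s)
      (hE : ¬ ∀ e ∈ E, EvEq M (fun _ => n) (updRef M s.v (.elem X n) (fun _ => V)) e) :
      Step M (.spotcheck i j X n V E) σ (upd σ i CState.error)

/-- The ground references occurring in a term. -/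
inductive RefIn {S : Sig} (M : Model S) : Ref S → Term S → Prop
  | simple (X) : RefIn M (.var X) (.var (.simple X))
  | idxN (X n) : RefIn M (.elem X n) (.var (.idx X (.nat n)))
  | idxI (X k) : RefIn M (.elem X 0) (.var (.idx X (.ivar k)))
  | app {f ts t r} : t ∈ ts → RefIn M r t → RefIn M r (.app f ts)
  | iter {f X n} : n < M.Range X → RefIn M (.elem X n) (.iter f X)

/-- Trace-consistency conditions for a single event: values are set at most
once (the previous value is ⊥); variables and properties are not used before
being received or computed; `compute` events of a component either are
contemplated by the architecture or respect the dependence relation `Dep_i`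
(adversarial computations), and their input variables are all defined. -/
inductive EventOK {S : Sig} (M : Model S) (A : Arch S) (σ : GState S) : Event S → Prop
  | has {i r f s} : σ i = CState.ok s → AllBot M s.v r →
      EventOK M A σ (.has i r f)
  | receive {i j ss rvs s} : σ i = CState.ok s →
      (∀ rv ∈ rvs, AllBot M s.v (Prod.fst rv)) →
      EventOK M A σ (.receive i j ss rvs)
  | compute {i r T s} : σ i = CState.ok s → AllBot M s.v r →
      (∀ r', RefIn M r' T → NoBot M s.v r') →
      (M.dep i r {r' | RefIn M r' T} ∨ ∃ α ∈ A, Inst (Event.compute i r T) α) →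
      EventOK M A σ (.compute i r T)
  | check {i E s} : σ i = CState.ok s →
      (∀ e ∈ E, ∀ r, RefIn M r (Eqn.lhs e) ∨ RefIn M r (Eqn.rhs e) → NoBot M s.v r) →
      EventOK M A σ (.check i E)
  | verifP {i p s} : σ i = CState.ok s → Stmt.pro p ∈ s.rcv →
      EventOK M A σ (.verifP i p)
  | verifA {i a s} : σ i = CState.ok s → Stmt.att a ∈ s.rcv →
      EventOK M A σ (.verifA i a)
  | spotcheck {i j X n V E s} : σ i = CState.ok s → s.v X n = none →
      EventOK M A σ (.spotcheck i j X n V E)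

/-- Execution of a consistent trace: `Exec M A σ θ σ'` iff the trace `θ` is
consistent from `σ` and the iterated event semantics `S_T` maps `σ` to `σ'`. -/
inductive Exec {S : Sig} (M : Model S) (A : Arch S) :
    GState S → List (Event S) → GState S → Prop
  | nil (σ) : Exec M A σ [] σ
  | cons {σ σ' σ'' e θ} : EventOK M A σ e → Step M e σ σ' → Exec M A σ' θ σ'' →
      Exec M A σ (e :: θ) σ''

/-- The semantics `S(A)` of an architecture: the set of states produced by
consistent traces compatible with `A`. -/
def SemA {S : Sig} (M : Model S) (A : Arch S) : Set (GState S) :=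
  {σ | ∃ θ, Compatible A θ ∧ Exec M A (Init A) θ σ}

/-- `S_i(A)`: the states of `S(A)` that are well defined for component `C_i`. -/
def SemI {S : Sig} (M : Model S) (A : Arch S) (i : S.Comp) : Set (GState S) :=
  {σ | σ ∈ SemA M A ∧ σ i ≠ CState.error}

/-- The ordering `σ ≥ σ'` on states derived from the prefix ordering on
compatible traces. -/
def GEi {S : Sig} (M : Model S) (A : Arch S) (σ σ' : GState S) : Prop :=
  ∃ θ θ', Compatible A θ ∧ Compatible A θ' ∧
    Exec M A (Init A) θ σ ∧ Exec M A (Init A) θ' σ' ∧ θ' <+: θ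

/-- The properties of the architecture logic (Table 5). -/
inductive AProp (S : Sig) : Type
  | hasAll : S.Comp → Ref S → AProp S
  | hasNone : S.Comp → Ref S → AProp S
  | hasOne : S.Comp → Ref S → AProp S
  | K : S.Comp → LEqn S → AProp S
  | B : S.Comp → LEqn S → AProp S
  | and : AProp S → AProp S → AProp S

/-- The semantics `S(φ)` of properties (Table 6): `Sat M A φ` iff `A ∈ S(φ)`. -/
def Sat {S : Sig} (M : Model S) (A : Arch S) : AProp S → Prop
  | .hasAll i r => ∃ σ ∈ SemA M A, ∃ s, σ i = CState.ok s ∧ NoBot M s.v r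
  | .hasNone i r => ∀ σ ∈ SemA M A, ∀ s, σ i = CState.ok s → AllBot M s.v r
  | .hasOne i r => ∀ σ ∈ SemA M A, ∀ s, σ i = CState.ok s → AtMostOne M s.v r
  | .K i e => ∀ σ' ∈ SemI M A i, ∃ σ ∈ SemI M A i, GEi M A σ σ' ∧
      ∃ s e', σ i = CState.ok s ∧ M.deduce i s.pk e' ∧ LImp M e' e
  | .B i e => ∀ σ' ∈ SemI M A i, ∃ σ ∈ SemI M A i, GEi M A σ σ' ∧
      ∃ s e1 e2, σ i = CState.ok s ∧ M.deduce i s.pb e1 ∧ M.deduce i s.pk e2 ∧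
        LImp M (.and e1 e2) e
  | .and φ1 φ2 => Sat M A φ1 ∧ Sat M A φ2

/-- `C_i` is the owner (possessor or computer) of the variable `X` in `A`. -/
def Owner {S : Sig} (A : Arch S) (i : S.Comp) (X : S.Var) : Prop :=
  (∃ tv, ArchRel.has i tv ∈ A ∧ TVar.base tv = X) ∨
  (∃ tv T, ArchRel.compute i tv T ∈ A ∧ TVar.base tv = X)

/-- `C_i` can receive or compute the variable `X` in `A`. -/
def CanGet {S : Sig} (A : Arch S) (i : S.Comp) (X : S.Var) : Prop :=
  Owner A i X ∨
  ∃ j ss tvs tv, ArchRel.receive i j ss tvs ∈ A ∧ tv ∈ tvs ∧ TVar.base tv = X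

/-- The (base) variables occurring in a term. -/
inductive VarIn {S : Sig} : S.Var → Term S → Prop
  | var (tv : TVar S) : VarIn tv.base (.var tv)
  | app {X f ts t} : t ∈ ts → VarIn X t → VarIn X (.app f ts)
  | iter (f X) : VarIn X (.iter f X)

/-- Consistency of architectures (the set `Γ`): each variable is possessed or
computed by a single component; a component cannot receive a variable from
two different sources; a component computing a variable or checking a property
can receive or compute all the necessary input variables; a component only
verifies statements that it can receive. -/
structure ArchConsistent {S : Sig} (M : Model S) (A : Arch S) : Prop where
  uniqueOwner : ∀ i i' X, Owner A i X → Owner A i' X → i = i'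
  uniqueSender : ∀ i j j' ss ss' tvs tvs' tv tv',
    ArchRel.receive i j ss tvs ∈ A → ArchRel.receive i j' ss' tvs' ∈ A →
    tv ∈ tvs → tv' ∈ tvs' → TVar.base tv = TVar.base tv' → j = j'
  computeInputs : ∀ i tv T X, ArchRel.compute i tv T ∈ A → VarIn X T → CanGet A i X
  checkInputs : ∀ i E X, ArchRel.check i E ∈ A → ∀ e ∈ E,
    (VarIn X (Eqn.lhs e) ∨ VarIn X (Eqn.rhs e)) → CanGet A i X
  verifPRecv : ∀ i p, ArchRel.verifP i p ∈ A →
    ∃ j ss tvs, ArchRel.receive i j ss tvs ∈ A ∧ Stmt.pro p ∈ ss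
  verifARecv : ∀ i a, ArchRel.verifA i a ∈ A →
    ∃ j ss tvs, ArchRel.receive i j ss tvs ∈ A ∧ Stmt.att a ∈ ss

/-- `MatchVar X̃ r`: the ground reference `r` is an instance of the (possibly
indexed) variable `X̃` (a variable indexed by an index variable covers the
whole array as well as each of its elements). -/
inductive MatchVar {S : Sig} : TVar S → Ref S → Prop
  | simple (X) : MatchVar (.simple X) (.var X)
  | nat (X n) : MatchVar (.idx X (.nat n)) (.elem X n)
  | ivarElem (X k n) : MatchVar (.idx X (.ivar k)) (.elem X n)
  | ivarAll (X k) : MatchVar (.idx X (.ivar k)) (.var X)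

/-- Derivability of `Has_i^all` properties (rules H1, H2, H3, H5 and H7 of
Table 7). -/
inductive DerivAll {S : Sig} (M : Model S) (A : Arch S) (i : S.Comp) : Ref S → Prop
  | H1 {tv r} : ArchRel.has i tv ∈ A → MatchVar tv r → DerivAll M A i r
  | H2 {j ss tvs tv r} : ArchRel.receive i j ss tvs ∈ A → tv ∈ tvs →
      MatchVar tv r → DerivAll M A i r
  | H3 {tv T r} : ArchRel.compute i tv T ∈ A → MatchVar tv r → DerivAll M A i r
  | H5 {r rs} : M.dep i r rs → (∀ r' ∈ rs, DerivAll M A i r') → DerivAll M A i r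
  | H7 {X k} : DerivAll M A i (.var X) → k < M.Range X → DerivAll M A i (.elem X k)

/-- None of the preconditions of rules H1, H2, H3 or H5 holds at `C_i` for the
variable `X` or any of its elements. -/
def NoOtherSrc {S : Sig} (M : Model S) (A : Arch S) (i : S.Comp) (X : S.Var) : Prop :=
  (∀ tv, ArchRel.has i tv ∈ A → TVar.base tv ≠ X) ∧
  (∀ j ss tvs tv, ArchRel.receive i j ss tvs ∈ A → tv ∈ tvs → TVar.base tv ≠ X) ∧
  (∀ tv T, ArchRel.compute i tv T ∈ A → TVar.base tv ≠ X) ∧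
  (∀ r rs, Ref.base r = X → M.dep i r rs → ¬ (∀ r' ∈ rs, DerivAll M A i r'))

/-- None of the preconditions of rules H1, H2, H3, H4 or H5 holds at `C_i` for
the variable `X` or any of its elements (precondition of rule H6). -/
def NoSource {S : Sig} (M : Model S) (A : Arch S) (i : S.Comp) (X : S.Var) : Prop :=
  NoOtherSrc M A i X ∧ ∀ j Y k E, ArchRel.spotcheck i j Y k E ∈ A → Y ≠ X

/-- The axiomatics of Table 7: `Deriv M A φ` iff `A ⊢ φ`. -/
inductive Deriv {S : Sig} (M : Model S) (A : Arch S) : AProp S → Prop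
  | hasAllI {i r} : DerivAll M A i r → Deriv M A (.hasAll i r)
  | H4 {i j X k E} : ArchRel.spotcheck i j X k E ∈ A → Deriv M A (.hasOne i (.var X))
  | H6 {i} (r : Ref S) : NoSource M A i (Ref.base r) → Deriv M A (.hasNone i r)
  | H8 {i X k} : Deriv M A (.hasNone i (.var X)) → k < M.Range X →
      Deriv M A (.hasNone i (.elem X k))
  | HNO {i r} : Deriv M A (.hasNone i r) → Deriv M A (.hasOne i r)
  | K1 {i tv T} : ArchRel.compute i tv T ∈ A →
      Deriv M A (.K i (.atom ⟨.var tv, .eq, T⟩))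
  | K2 {i E e} : ArchRel.check i E ∈ A → e ∈ E → Deriv M A (.K i (.atom e))
  | K3 {i j Ps e} : ArchRel.verifP i (.mk j Ps) ∈ A → PItem.eq e ∈ Ps →
      Deriv M A (.K i (.atom e))
  | K4 {i j Ps k E' e} : ArchRel.verifP i (.mk j Ps) ∈ A →
      PItem.att (.mk k E') ∈ Ps → ArchRel.trust i k ∈ A → e ∈ E' →
      Deriv M A (.K i (.atom e))
  | K5 {i j E e} : ArchRel.verifA i (.mk j E) ∈ A → ArchRel.trust i j ∈ A →
      e ∈ E → Deriv M A (.K i (.atom e))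
  | Brule {i j X k E e} : ArchRel.spotcheck i j X k E ∈ A → e ∈ E →
      Deriv M A (.B i (.atom e))
  | KB {i e} : Deriv M A (.K i e) → Deriv M A (.B i e)
  | Kand {i e1 e2} : Deriv M A (.K i e1) → Deriv M A (.K i e2) →
      Deriv M A (.K i (.and e1 e2))
  | Band {i e1 e2} : Deriv M A (.B i e1) → Deriv M A (.B i e2) →
      Deriv M A (.B i (.and e1 e2))
  | Kded {i e0} (E : Set (Eqn S)) : M.deduce i (PProp.eq '' E) e0 →
      (∀ e ∈ E, Deriv M A (.K i (.atom e))) → Deriv M A (.K i e0)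
  | Bded {i e0} (E : Set (Eqn S)) : M.deduce i (PProp.eq '' E) e0 →
      (∀ e ∈ E, Deriv M A (.B i (.atom e))) → Deriv M A (.B i e0)
  | Iand {φ1 φ2} : Deriv M A φ1 → Deriv M A φ2 → Deriv M A (.and φ1 φ2)

/-!
The value `σ_i^v(X)` can only be set by `Has`, `Receive`, `Compute` or `Spotcheck` events of
`C_i`. In a compatible trace every event other than a `Compute` instantiates a relation of `A`,
and those never mention `X` at `C_i`. A `Compute` of `X` not contemplated by `A` must follow
`Dep_i` with all its inputs defined in a reachable state, so each input satisfies `Has_i^all`,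
which the last hypothesis excludes. Hence `σ_i^v(X) = ⊥` is an invariant of compatible traces.
-/

def Event.Writes {S : Sig} (i : S.Comp) (X : S.Var) : Event S → Prop
  | .has j r _ => j = i ∧ r.base = X
  | .receive j _ _ rvs => j = i ∧ ∃ rv ∈ rvs, rv.1.base = X
  | .compute j r _ => j = i ∧ r.base = X
  | .spotcheck j _ Y _ _ _ => j = i ∧ Y = X
  | _ => False

def VarUndefined {S : Sig} (i : S.Comp) (X : S.Var) (σ : GState S) : Prop :=
  ∀ s, σ i = CState.ok s → ∀ n, s.v X n = none

section Frame

variable {S : Sig} (M : Model S)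

lemma instVar_base (η : S.IVar → ℕ) (tv : TVar S) : (instVar η tv).base = tv.base := by
  rcases tv with _ | ⟨_, _ | _⟩ <;> rfl

lemma updRef_apply_of_base_ne (w : VState S) {r : Ref S} (f : ℕ → S.Val) {X : S.Var}
    (hX : r.base ≠ X) : updRef M w r f X = w X := by
  funext n
  cases r <;> simp only [Ref.base] at hX <;> simp [updRef, Ne.symm hX]

lemma foldl_updRef_apply_of_base_ne {X : S.Var} :
    ∀ {l : List (Ref S × (ℕ → S.Val))} (w : VState S), (∀ rv ∈ l, rv.1.base ≠ X) →
      l.foldl (fun w rv => updRef M w rv.1 rv.2) w X = w X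
  | [], _, _ => rfl
  | rv :: l, w, hl => by
    rw [List.foldl_cons, foldl_updRef_apply_of_base_ne _ fun rv' h => hl rv' (.tail _ h),
      updRef_apply_of_base_ne M w _ (hl rv List.mem_cons_self)]

lemma upd_eq_ok {σ : GState S} {j i : S.Comp} {c : CState S} {s : OkState S}
    (h : upd σ j c i = CState.ok s) : (i = j ∧ c = CState.ok s) ∨ σ i = CState.ok s := by
  unfold upd at h
  split_ifs at h with hij
  exacts [Or.inl ⟨hij, h⟩, Or.inr h]

lemma Step.v_apply_of_not_writes {e : Event S} {σ σ' : GState S} (hstep : Step M e σ σ')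
    {i : S.Comp} {X : S.Var} (hw : ¬ e.Writes i X) {s' : OkState S}
    (hs' : σ' i = CState.ok s') : ∃ s, σ i = CState.ok s ∧ s'.v X = s.v X := by
  cases hstep <;> rcases upd_eq_ok hs' with ⟨rfl, hc⟩ | hσ
  all_goals first
    | exact ⟨s', hσ, rfl⟩
    | cases hc
  case has.inl.refl h => exact ⟨_, h, updRef_apply_of_base_ne M _ _ fun hb => hw ⟨rfl, hb⟩⟩
  case receive.inl.refl h =>
    exact ⟨_, h, foldl_updRef_apply_of_base_ne M _ fun rv hrv hb => hw ⟨rfl, rv, hrv, hb⟩⟩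
  case compute.inl.refl _ h =>
    exact ⟨_, h, updRef_apply_of_base_ne M _ _ fun hb => hw ⟨rfl, hb⟩⟩
  case spot_ok.inl.refl _ h =>
    exact ⟨_, h, updRef_apply_of_base_ne M _ (r := .elem _ _) (fun _ => _)
      fun hb => hw ⟨rfl, hb⟩⟩
  all_goals rename_i h; exact ⟨_, h, rfl⟩

lemma Step.varUndefined {e : Event S} {σ σ' : GState S} (hstep : Step M e σ σ') {i : S.Comp}
    {X : S.Var} (hw : ¬ e.Writes i X) (hσ : VarUndefined i X σ) : VarUndefined i X σ' := by
  intro s' hs' n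
  obtain ⟨s, hs, hv⟩ := hstep.v_apply_of_not_writes M hw hs'
  rw [hv]
  exact hσ s hs n

end Frame

section Traces

variable {S : Sig} {M : Model S} {A : Arch S}

lemma Exec.append {σ₀ σ₁ σ₂ : GState S} {θ₁ θ₂ : List (Event S)} (h₁ : Exec M A σ₀ θ₁ σ₁)
    (h₂ : Exec M A σ₁ θ₂ σ₂) : Exec M A σ₀ (θ₁ ++ θ₂) σ₂ := by
  induction h₁ with
  | nil => exact h₂
  | cons hok hstep _ ih => exact .cons hok hstep (ih h₂)

lemma Compatible.of_append {θ₁ θ₂ : List (Event S)} (h : Compatible A (θ₁ ++ θ₂)) :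
    Compatible A θ₁ := by
  refine ⟨fun e he => h.1 e (List.mem_append_left _ he),
    fun a b i j X n V E X' n' V' E' hab ha hb => ?_⟩
  refine h.2 (a.castLE (by simp)) (b.castLE (by simp)) i j X n V E X' n' V' E' ?_ ?_ ?_
  · simpa [Fin.ext_iff] using hab
  · simpa [List.getElem_append_left] using ha
  · simpa [List.getElem_append_left] using hb

end Traces

lemma varUndefined_init {S : Sig} (A : Arch S) (i : S.Comp) (X : S.Var) :
    VarUndefined i X (Init A) := by
  intro s hs n
  cases hs
  rfl

structure NoDirectSource {S : Sig} (A : Arch S) (i : S.Comp) (X : S.Var) : Prop where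
  has : ∀ tv, ArchRel.has i tv ∈ A → TVar.base tv ≠ X
  receive : ∀ j ss tvs tv, ArchRel.receive i j ss tvs ∈ A → tv ∈ tvs → TVar.base tv ≠ X
  compute : ∀ tv T, ArchRel.compute i tv T ∈ A → TVar.base tv ≠ X
  spotcheck : ∀ j Y k E, ArchRel.spotcheck i j Y k E ∈ A → Y ≠ X

section NoSource

variable {S : Sig} {M : Model S} {A : Arch S} {i : S.Comp} {X : S.Var}

lemma Inst.not_writes (hA : NoDirectSource A i X) {e : Event S} {α : ArchRel S} (hα : α ∈ A)
    (hinst : Inst e α) : ¬ e.Writes i X := by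
  cases hinst with
  | has η => rintro ⟨rfl, hb⟩; exact hA.has _ hα (by rwa [instVar_base] at hb)
  | @receive _ _ _ tvs _ η hlen hcorr =>
    rintro ⟨rfl, rv, hrv, hb⟩
    obtain ⟨p, hp, rfl⟩ := List.getElem_of_mem hrv
    have hp' : p < tvs.length := hlen ▸ hp
    refine hA.receive _ _ _ _ hα (List.getElem_mem hp') ?_
    rwa [← instVar_base η, ← hcorr p _ _ (List.getElem?_eq_getElem hp')
      (List.getElem?_eq_getElem hp)]
  | compute η => rintro ⟨rfl, hb⟩; exact hA.compute _ _ hα (by rwa [instVar_base] at hb)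
  | spotcheck => rintro ⟨rfl, rfl⟩; exact hA.spotcheck _ _ _ _ hα rfl
  | _ => exact id

lemma EventOK.not_writes (hA : NoDirectSource A i X)
    (hdep : ∀ r rs, Ref.base r = X → M.dep i r rs → ¬ ∀ r' ∈ rs, Sat M A (.hasAll i r'))
    {σ : GState S} {e : Event S} (hσ : σ ∈ SemA M A) (hok : EventOK M A σ e)
    (hinst : ¬ e.isCompute → ∃ α ∈ A, Inst e α) : ¬ e.Writes i X := by
  cases hok with
  | @compute _ r _ s hs _ hin hsrc =>
    rcases hsrc with hr | ⟨α, hα, hinst⟩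
    · rintro ⟨rfl, hb⟩
      exact hdep r _ hb hr fun r' hr' => ⟨σ, hσ, s, hs, hin r' hr'⟩
    · exact hinst.not_writes hA hα
  | _ =>
    obtain ⟨α, hα, hinst⟩ := hinst fun h => h
    exact hinst.not_writes hA hα

lemma Exec.varUndefined (hA : NoDirectSource A i X)
    (hdep : ∀ r rs, Ref.base r = X → M.dep i r rs → ¬ ∀ r' ∈ rs, Sat M A (.hasAll i r'))
    {σ σ' : GState S} {θ : List (Event S)} (hexec : Exec M A σ θ σ') :
    ∀ {θ₀}, Compatible A (θ₀ ++ θ) → Exec M A (Init A) θ₀ σ →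
      VarUndefined i X σ → VarUndefined i X σ' := by
  induction hexec with
  | nil => exact fun _ _ h => h
  | @cons σ _ _ e θ hok hstep _ ih =>
    intro θ₀ hcompat hpre hσ
    have hσA : σ ∈ SemA M A := ⟨θ₀, hcompat.of_append, hpre⟩
    have hw := hok.not_writes hA hdep hσA (hcompat.1 e (by simp))
    exact ih (θ₀ := θ₀ ++ [e]) (by simpa using hcompat)
      (hpre.append (.cons hok hstep (.nil _))) (hstep.varUndefined M hw hσ)

end NoSource

theorem H6_sound_general {S : Sig} (M : Model S) (A : Arch S)
    (i : S.Comp) (X : S.Var)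
    (h1 : ∀ tv, ArchRel.has i tv ∈ A → TVar.base tv ≠ X)
    (h2 : ∀ j ss tvs tv, ArchRel.receive i j ss tvs ∈ A → tv ∈ tvs →
      TVar.base tv ≠ X)
    (h3 : ∀ tv T, ArchRel.compute i tv T ∈ A → TVar.base tv ≠ X)
    (h4 : ∀ j Y k E, ArchRel.spotcheck i j Y k E ∈ A → Y ≠ X)
    (h5 : ∀ r rs, Ref.base r = X → M.dep i r rs →
      ¬ ∀ r' ∈ rs, Sat M A (.hasAll i r'))
    (r : Ref S) (hr : Ref.base r = X) :
    Sat M A (.hasNone i r) := by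
  rintro σ ⟨θ, hcompat, hexec⟩ s hs
  have hX : ∀ n, s.v X n = none :=
    hexec.varUndefined ⟨h1, h2, h3, h4⟩ h5 (θ₀ := []) hcompat (.nil _) (varUndefined_init A i X)
      s hs
  subst hr
  cases r with
  | var => exact fun k _ => hX k
  | elem _ k => exact hX k

/-- Soundness of rule H6: if none of the preconditions of rules H1–H5 holds at
`C_i` for `X` or any `X_k` — no `Has_i`, no `Receive` carrying `X`, no
`Compute_i` of `X`, no `Spotcheck` on `X`, and no `Dep_i` whose input
variables `C_i` can all fully obtain — then `A ∈ S(Has_i^none(X̃))`: every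
state reached by a trace compatible with `A` satisfies `σ_i^v(X̃) = ⊥`. -/
theorem H6_sound {S : Sig} (M : Model S) (A : Arch S) (hA : ArchConsistent M A)
    (i : S.Comp) (X : S.Var)
    (h1 : ∀ tv, ArchRel.has i tv ∈ A → TVar.base tv ≠ X)
    (h2 : ∀ j ss tvs tv, ArchRel.receive i j ss tvs ∈ A → tv ∈ tvs →
      TVar.base tv ≠ X)
    (h3 : ∀ tv T, ArchRel.compute i tv T ∈ A → TVar.base tv ≠ X)
    (h4 : ∀ j Y k E, ArchRel.spotcheck i j Y k E ∈ A → Y ≠ X)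
    (h5 : ∀ r rs, Ref.base r = X → M.dep i r rs →
      ¬ ∀ r' ∈ rs, Sat M A (.hasAll i r'))
    (r : Ref S) (hr : Ref.base r = X) :
    Sat M A (.hasNone i r) :=
  H6_sound_general M A i X h1 h2 h3 h4 h5 r hr

end PrivacyArch
end

section
/- Soundness of rules H7 and H8 (projection to array elements): for every consistent architecture A and array variable X, if A ∈ S(Has_i^all(X)) then A ∈ S(Has_i^all(X_k)) for every k ∈ Range(X); and if A ∈ S(Has_i^none(X)) then A ∈ S(Has_i^none(X_k)) for every k ∈ Range(X). -/
namespace PrivacyArch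

attribute [local instance] Classical.propDecidable

/-- Soundness of rules H7 and H8 (projection to array elements): if
`A ∈ S(Has_i^all(X))` then `A ∈ S(Has_i^all(X_k))` for every `k ∈ Range(X)`,
and if `A ∈ S(Has_i^none(X))` then `A ∈ S(Has_i^none(X_k))` for every
`k ∈ Range(X)`. -/
theorem H7_H8_sound {S : Sig} (M : Model S) (A : Arch S)
    (hA : ArchConsistent M A) (i : S.Comp) (X : S.Var) :
    (Sat M A (.hasAll i (.var X)) →
      ∀ k < M.Range X, Sat M A (.hasAll i (.elem X k))) ∧
    (Sat M A (.hasNone i (.var X)) →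
      ∀ k < M.Range X, Sat M A (.hasNone i (.elem X k))) := by
  constructor
  · rintro ⟨σ, hσ, s, hs, hnb⟩ k hk
    exact ⟨σ, hσ, s, hs, hnb k hk⟩
  · intro h k hk σ hσ s hs
    exact h σ hσ s hs k hk

end PrivacyArch
end

section
/- Data-minimisation properties of the smart metering architecture: the architecture A_SM derives, in the axiomatics of Table 7, A_SM ⊢ Has_P^all(Fee) (by rule H2, since the provider receives Fee from the meter), A_SM ⊢ Has_P^none(Cons) ∧ Has_P^none(x) ∧ Has_P^none(y) (by rule H6, since none of the preconditions of rules H1–H5 holds at P for Cons, x, or y given Dep_P), and A_SM ⊢ Has_M^all(Cons) ∧ Has_M^all(x) ∧ Has_M^all(y) ∧ Has_M^all(Fee) (by rules H1 and H3). -/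
namespace PrivacyArch

attribute [local instance] Classical.propDecidable

/-! ### The smart metering case study -/

/-- The components: the meter `M` and the provider `P`. -/
inductive SMComp : Type | M | P

/-- The variables: the consumptions `Cons`, the intermediate arrays `x` and
`y`, and the global fee `Fee`. -/
inductive SMVar : Type | Cons | x | y | Fee

/-- The function symbols: the metering function `S`, the pricing function `F`
and the summation `+` (used iterated, as `⊙+`). -/
inductive SMFun : Type | S | F | plus

/-- The signature of the smart metering architecture (`t` is the only index
variable). -/
def SMSig : Sig :=
  { Comp := SMComp, Var := SMVar, IVar := Unit, Fn := SMFun,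
    Cst := Empty, Val := ℤ }

/-- `Cons_t`. -/
def tvCons : TVar SMSig := .idx SMVar.Cons (.ivar ())
/-- `x_t`. -/
def tvX : TVar SMSig := .idx SMVar.x (.ivar ())
/-- `y_t`. -/
def tvY : TVar SMSig := .idx SMVar.y (.ivar ())
/-- `Fee`. -/
def tvFee : TVar SMSig := .simple SMVar.Fee

/-- The equation `x_t = S(Cons_t)`. -/
def eqX : Eqn SMSig := ⟨.var tvX, Rel.eq, .app SMFun.S [.var tvCons]⟩
/-- The equation `y_t = F(x_t)`. -/
def eqY : Eqn SMSig := ⟨.var tvY, Rel.eq, .app SMFun.F [.var tvX]⟩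
/-- The equation `Fee = ⊙+(y)`. -/
def eqFee : Eqn SMSig := ⟨.var tvFee, Rel.eq, .iter SMFun.plus SMVar.y⟩

/-- The attestation
`Attest_M({Fee = ⊙+(y), y_t = F(x_t), x_t = S(Cons_t)})` of the meter. -/
def attSM : Att SMSig := .mk SMComp.M [eqFee, eqY, eqX]

/-- The smart metering architecture `A_SM` of Figure 1. -/
def A_SM : Arch SMSig :=
  [ .has SMComp.M tvCons,
    .compute SMComp.M tvX (.app SMFun.S [.var tvCons]),
    .compute SMComp.M tvY (.app SMFun.F [.var tvX]),
    .compute SMComp.M tvFee (.iter SMFun.plus SMVar.y),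
    .receive SMComp.P SMComp.M [.att attSM] [tvFee],
    .verifA SMComp.P attSM,
    .trust SMComp.P SMComp.M ]

/-- The dependence relations of `M` and `P` (the same for both components):
exactly `(Fee, {y_t})`, `(y_t, {x_t})`, `(x_t, {y_t})`, `(x_t, {Cons_t})` and
`(Cons_t, {x_t})`; in particular `(y_t, {Fee}) ∉ Dep_P`, so the summation
cannot be inverted. -/
def SMdep : SMComp → Ref SMSig → Set (Ref SMSig) → Prop := fun _ r rs =>
  (r = Ref.var SMVar.Fee ∧ rs = {r' | ∃ t, r' = Ref.elem SMVar.y t}) ∨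
  (∃ t, r = Ref.elem SMVar.y t ∧ rs = {Ref.elem SMVar.x t}) ∨
  (∃ t, r = Ref.elem SMVar.x t ∧ rs = {Ref.elem SMVar.y t}) ∨
  (∃ t, r = Ref.elem SMVar.x t ∧ rs = {Ref.elem SMVar.Cons t}) ∨
  (∃ t, r = Ref.elem SMVar.Cons t ∧ rs = {Ref.elem SMVar.x t})

/-!
A set of variables closed under the rules H1–H3 and H5 at `C_i` contains every variable
`C_i` can derive; H7 only passes from an array to its elements. For the provider, `{Fee}` is
such a set: `Fee` is all it receives, and since `Dep_P` has no pair `(y_t, {Fee})`, every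
dependence of a variable outside `{Fee}` needs another variable outside `{Fee}`. So no
precondition of H5 can hold at `P` for `Cons`, `x` or `y`, and H6 applies to them.
-/

section SourceClosure

variable {S : Sig} {M : Model S} {A : Arch S} {i : S.Comp}

theorem MatchVar.base_eq {tv : TVar S} {r : Ref S} (h : MatchVar tv r) :
    r.base = tv.base := by
  cases h <;> rfl

structure SourceClosed (M : Model S) (A : Arch S) (i : S.Comp) (V : Set S.Var) : Prop where
  has : ∀ tv, ArchRel.has i tv ∈ A → tv.base ∈ V
  receive : ∀ j ss tvs tv, ArchRel.receive i j ss tvs ∈ A → tv ∈ tvs → tv.base ∈ V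
  compute : ∀ tv T, ArchRel.compute i tv T ∈ A → tv.base ∈ V
  dep : ∀ r rs, M.dep i r rs → (∀ r' ∈ rs, r'.base ∈ V) → r.base ∈ V

theorem DerivAll.base_mem {V : Set S.Var} (hV : SourceClosed M A i V) {r : Ref S}
    (h : DerivAll M A i r) : r.base ∈ V := by
  induction h with
  | H1 hmem hm => exact hm.base_eq ▸ hV.has _ hmem
  | H2 hmem htv hm => exact hm.base_eq ▸ hV.receive _ _ _ _ hmem htv
  | H3 hmem hm => exact hm.base_eq ▸ hV.compute _ _ hmem
  | H5 hd _ ih => exact hV.dep _ _ hd ih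
  | H7 _ _ ih => exact ih

theorem Deriv.hasNone_of_base_not_mem {V : Set S.Var} (hV : SourceClosed M A i V) {r : Ref S}
    (hr : r.base ∉ V) (hspot : ∀ j Y k E, ArchRel.spotcheck i j Y k E ∈ A → Y ≠ r.base) :
    Deriv M A (.hasNone i r) := by
  refine .H6 r ⟨⟨?_, ?_, ?_, ?_⟩, hspot⟩
  · exact fun tv hmem hbase => hr (hbase ▸ hV.has tv hmem)
  · exact fun j ss tvs tv hmem htv hbase => hr (hbase ▸ hV.receive j ss tvs tv hmem htv)
  · exact fun tv T hmem hbase => hr (hbase ▸ hV.compute tv T hmem)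
  · exact fun r' rs hbase hd hall => hr (hbase ▸ (DerivAll.H5 hd hall).base_mem hV)

end SourceClosure

theorem sourceClosed_A_SM_provider (Mo : Model SMSig) (hdep : Mo.dep = SMdep) :
    SourceClosed Mo A_SM SMComp.P {SMVar.Fee} where
  has tv hmem := by simp [A_SM] at hmem; cases hmem
  receive j ss tvs tv hmem htv := by
    simp [A_SM] at hmem
    cases hmem
    rw [List.mem_singleton.1 htv]
    rfl
  compute tv T hmem := by simp [A_SM] at hmem; rcases hmem with h | h | h <;> cases h
  dep r rs hd hall := by
    rw [hdep] at hd
    rcases hd with ⟨rfl, -⟩ | ⟨t, -, rfl⟩ | ⟨t, -, rfl⟩ | ⟨t, -, rfl⟩ | ⟨t, -, rfl⟩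
    · rfl
    all_goals exact SMVar.noConfusion (hall _ rfl : _ = _)

/-- Data-minimisation properties of the smart metering architecture: `A_SM`
derives, in the axiomatics of Table 7, `Has_P^all(Fee)` (by rule H2, since the
provider receives `Fee` from the meter),
`Has_P^none(Cons) ∧ Has_P^none(x) ∧ Has_P^none(y)` (by rule H6, since none of
the preconditions of rules H1–H5 holds at `P` for `Cons`, `x` or `y` given
`Dep_P`), and
`Has_M^all(Cons) ∧ Has_M^all(x) ∧ Has_M^all(y) ∧ Has_M^all(Fee)` (by rules H1
and H3). -/
theorem sm_minimisation (Mo : Model SMSig) (hdep : Mo.dep = SMdep) :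
    Deriv Mo A_SM
      (.and (.hasAll SMComp.P (.var SMVar.Fee))
        (.and
          (.and (.hasNone SMComp.P (.var SMVar.Cons))
            (.and (.hasNone SMComp.P (.var SMVar.x))
              (.hasNone SMComp.P (.var SMVar.y))))
          (.and (.hasAll SMComp.M (.var SMVar.Cons))
            (.and (.hasAll SMComp.M (.var SMVar.x))
              (.and (.hasAll SMComp.M (.var SMVar.y))
                (.hasAll SMComp.M (.var SMVar.Fee))))))) := by
  have hasNone_P : ∀ X, X ≠ SMVar.Fee → Deriv Mo A_SM (.hasNone SMComp.P (.var X)) :=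
    fun X hX => .hasNone_of_base_not_mem (sourceClosed_A_SM_provider Mo hdep) hX
      fun j Y k E hmem => absurd hmem (by simp [A_SM])
  refine .Iand ?feeP (.Iand (.Iand ?consP (.Iand ?xP ?yP))
    (.Iand ?consM (.Iand ?xM (.Iand ?yM ?feeM))))
  case feeP =>
    exact .hasAllI (.H2 (j := SMComp.M) (ss := [.att attSM]) (tvs := [tvFee]) (tv := tvFee)
      (by simp [A_SM]) (by simp) (.simple _))
  case consP => exact hasNone_P _ SMVar.noConfusion
  case xP => exact hasNone_P _ SMVar.noConfusion
  case yP => exact hasNone_P _ SMVar.noConfusion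
  case consM => exact .hasAllI (.H1 (tv := tvCons) (by simp [A_SM]) (.ivarAll _ _))
  case xM =>
    exact .hasAllI (.H3 (tv := tvX) (T := .app SMFun.S [.var tvCons]) (by simp [A_SM])
      (.ivarAll _ _))
  case yM =>
    exact .hasAllI (.H3 (tv := tvY) (T := .app SMFun.F [.var tvX]) (by simp [A_SM])
      (.ivarAll _ _))
  case feeM =>
    exact .hasAllI (.H3 (tv := tvFee) (T := .iter SMFun.plus SMVar.y) (by simp [A_SM])
      (.simple _))

end PrivacyArch
end
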